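/- arXiv:1608.00731 — 4 statements merged into one kernel-verified Lean document; each statement's English description precedes it below -/
import Mathlib

section
/- Define P : ℕ → ℕ by P n = 0 for n ≤ 1 and P n = Nat.clog 2 n + P (n / 2) for n ≥ 2. Then for every n : ℕ, P n ≤ k * (k + 1) / 2, where k = Nat.clog 2 n. (This is the paper's Theorem for reiterated progression based shrinking: in the worst case, one progression pass over an unsatisfiable core of size n invokes the solver ⌈log₂ n⌉ times and the process is then repeated on half of the literals, so the total number of solver invocations on a core C is O((log |C|)²).) -/
/-- Worst-case number of solver invocations of reiterated progression based
shrinking on a core of size `n`: one pass makes `⌈log₂ n⌉` calls and the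
process is repeated on half of the literals. -/
def P : ℕ → ℕ
  | 0 => 0
  | 1 => 0
  | n + 2 => Nat.clog 2 (n + 2) + P ((n + 2) / 2)
decreasing_by exact Nat.div_lt_self (by omega) (by omega)

theorem stmt_0 (n : ℕ) : P n ≤ Nat.clog 2 n * (Nat.clog 2 n + 1) / 2 := by
  induction n using Nat.strong_induction_on with
  | _ n ih =>
    match n, ih with
    | 0, _ => simp [P]
    | 1, _ => simp [P]
    | (m + 2), ih =>
      set n := m + 2 with hn
      have h2 : 2 ≤ n := by omega
      have hk : Nat.clog 2 n = Nat.clog 2 ((n + 1) / 2) + 1 := by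
        have := Nat.clog_of_two_le (b := 2) (n := n) (by norm_num) h2
        simpa using this
      set k := Nat.clog 2 n with hkdef
      have hk1 : 1 ≤ k := by omega
      have hmono : Nat.clog 2 (n / 2) ≤ k - 1 := by
        have : Nat.clog 2 (n / 2) ≤ Nat.clog 2 ((n + 1) / 2) :=
          Nat.clog_mono_right 2 (Nat.div_le_div_right (by omega))
        omega
      have hlt : n / 2 < n := Nat.div_lt_self (by omega) (by omega)
      have hIH : P (n / 2) ≤ Nat.clog 2 (n / 2) * (Nat.clog 2 (n / 2) + 1) / 2 :=
        ih _ hlt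
      have hstep : Nat.clog 2 (n / 2) * (Nat.clog 2 (n / 2) + 1) / 2 ≤
          (k - 1) * k / 2 := by
        apply Nat.div_le_div_right
        apply Nat.mul_le_mul hmono
        omega
      have hP : P n = k + P (n / 2) := by rw [P]
      have key : k + (k - 1) * k / 2 ≤ k * (k + 1) / 2 := by
        have ha : 2 ∣ (k - 1) * k := by
          rw [mul_comm]; exact (Nat.even_mul_pred_self k).two_dvd
        have hb : 2 ∣ k * (k + 1) := (Nat.even_mul_succ_self k).two_dvd
        have heq : k * (k + 1) = (k - 1) * k + 2 * k := by
          obtain ⟨j, hj⟩ := Nat.exists_eq_add_of_le hk1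
          rw [hj, Nat.add_sub_cancel_left]; ring
        obtain ⟨a, ha2⟩ := ha
        obtain ⟨b, hb2⟩ := hb
        rw [ha2, hb2] at heq ⊢
        simp only [Nat.mul_div_cancel_left _ (by norm_num : 0 < 2)]
        omega
      omega
end

section
/- Let n : ℕ, let k = Nat.clog 2 n, and let g : ℕ → ℕ satisfy g 0 = n and g (i+1) ≤ g i / 2 for all i (natural-number division). Then: (a) g i ≤ n / 2^i for all i; (b) Nat.clog 2 (g i) ≤ k − i for all i ≤ k; (c) g i ≤ 1 for all i ≥ k; and (d) ∑_{i=0}^{k} Nat.clog 2 (g i) ≤ k * (k + 1) / 2. -/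
/-- Quantitative core of the worst-case analysis of reiterated progression
based shrinking: `g i` is the number of core literals still to be treated at
the start of the `(i+1)`-st pass, each pass at least halves this number. -/
theorem stmt_3 (n : ℕ) (g : ℕ → ℕ) (hg0 : g 0 = n)
    (hg : ∀ i, g (i + 1) ≤ g i / 2) :
    (∀ i, g i ≤ n / 2 ^ i) ∧
    (∀ i ≤ Nat.clog 2 n, Nat.clog 2 (g i) ≤ Nat.clog 2 n - i) ∧
    (∀ i, Nat.clog 2 n ≤ i → g i ≤ 1) ∧
    (∑ i ∈ Finset.range (Nat.clog 2 n + 1), Nat.clog 2 (g i) ≤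
      Nat.clog 2 n * (Nat.clog 2 n + 1) / 2) := by
  set k := Nat.clog 2 n with hk
  have ha : ∀ i, g i ≤ n / 2 ^ i := by
    intro i
    induction i with
    | zero => simp [hg0]
    | succ i ih =>
      calc g (i + 1) ≤ g i / 2 := hg i
        _ ≤ (n / 2 ^ i) / 2 := Nat.div_le_div_right ih
        _ = n / 2 ^ (i + 1) := by rw [Nat.div_div_eq_div_mul, pow_succ]
  have hn : n ≤ 2 ^ k := Nat.le_pow_clog one_lt_two n
  have hb : ∀ i ≤ k, Nat.clog 2 (g i) ≤ k - i := by
    intro i hi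
    rw [Nat.clog_le_iff_le_pow one_lt_two]
    calc g i ≤ n / 2 ^ i := ha i
      _ ≤ 2 ^ k / 2 ^ i := Nat.div_le_div_right hn
      _ = 2 ^ (k - i) := Nat.pow_div hi (by norm_num)
  have hc : ∀ i, k ≤ i → g i ≤ 1 := by
    intro i hi
    calc g i ≤ n / 2 ^ i := ha i
      _ ≤ 2 ^ i / 2 ^ i := Nat.div_le_div_right
          (hn.trans (Nat.pow_le_pow_right (by norm_num) hi))
      _ = 1 := Nat.div_self (Nat.two_pow_pos i)
  refine ⟨ha, hb, hc, ?_⟩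
  calc ∑ i ∈ Finset.range (k + 1), Nat.clog 2 (g i)
      ≤ ∑ i ∈ Finset.range (k + 1), (k - i) := by
        refine Finset.sum_le_sum fun i hi => hb i ?_
        exact Nat.lt_succ_iff.mp (Finset.mem_range.mp hi)
    _ = ∑ i ∈ Finset.range (k + 1), i := by
        rw [← Finset.sum_range_reflect]
        exact Finset.sum_congr rfl fun i hi => by
          have := Nat.lt_succ_iff.mp (Finset.mem_range.mp hi); omega
    _ = k * (k + 1) / 2 := by rw [Finset.sum_range_id, Nat.add_sub_cancel, Nat.mul_comm]
end

section
/- Let L : ℕ and let B, a, b : Fin L → ℕ satisfy a l ≤ B l and b l ≤ B l for every l. Define the multipliers s : Fin L → ℕ by s l = ∏_{i < l} (B i + 1). Then ∑_{l} s l * a l < ∑_{l} s l * b l if and only if there exists l such that a l < b l and a i ≤ b i for every i > l. -/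
private lemma key (C f : ℕ → ℕ) (hf : ∀ i, f i ≤ C i) (n : ℕ) :
    ∑ i ∈ Finset.range n, (∏ j ∈ Finset.range i, (C j + 1)) * f i <
      ∏ j ∈ Finset.range n, (C j + 1) := by
  induction n with
  | zero => simp
  | succ n ih =>
    rw [Finset.sum_range_succ, Finset.prod_range_succ]
    calc ∑ i ∈ Finset.range n, (∏ j ∈ Finset.range i, (C j + 1)) * f i
          + (∏ j ∈ Finset.range n, (C j + 1)) * f n
        < (∏ j ∈ Finset.range n, (C j + 1))
          + (∏ j ∈ Finset.range n, (C j + 1)) * C n := by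
          exact Nat.add_lt_add_of_lt_of_le ih (Nat.mul_le_mul_left _ (hf n))
      _ = (∏ j ∈ Finset.range n, (C j + 1)) * (C n + 1) := by ring

private lemma lexlt (C f g : ℕ → ℕ) (hf : ∀ i, f i ≤ C i) (n l : ℕ) (hln : l < n)
    (hl : f l < g l) (hrest : ∀ i, l < i → i < n → f i ≤ g i) :
    ∑ i ∈ Finset.range n, (∏ j ∈ Finset.range i, (C j + 1)) * f i <
      ∑ i ∈ Finset.range n, (∏ j ∈ Finset.range i, (C j + 1)) * g i := by
  have hsplit : ∀ h : ℕ → ℕ,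
      ∑ i ∈ Finset.range n, (∏ j ∈ Finset.range i, (C j + 1)) * h i =
      ∑ i ∈ Finset.range (l + 1), (∏ j ∈ Finset.range i, (C j + 1)) * h i +
      ∑ i ∈ Finset.Ico (l + 1) n, (∏ j ∈ Finset.range i, (C j + 1)) * h i := by
    intro h
    rw [Finset.range_eq_Ico, ← Finset.sum_Ico_consecutive _ (Nat.zero_le (l + 1)) hln]
    rw [Finset.range_eq_Ico]
  rw [hsplit f, hsplit g]
  have h1 : ∑ i ∈ Finset.range (l + 1), (∏ j ∈ Finset.range i, (C j + 1)) * f i <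
      ∑ i ∈ Finset.range (l + 1), (∏ j ∈ Finset.range i, (C j + 1)) * g i := by
    rw [Finset.sum_range_succ, Finset.sum_range_succ]
    calc ∑ i ∈ Finset.range l, (∏ j ∈ Finset.range i, (C j + 1)) * f i
          + (∏ j ∈ Finset.range l, (C j + 1)) * f l
        < (∏ j ∈ Finset.range l, (C j + 1)) * (f l + 1) := by
          have := key C f hf l
          rw [Nat.mul_add, Nat.mul_one]
          omega
      _ ≤ (∏ j ∈ Finset.range l, (C j + 1)) * g l := Nat.mul_le_mul_left _ hl
      _ ≤ _ := Nat.le_add_left _ _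
  have h2 : ∑ i ∈ Finset.Ico (l + 1) n, (∏ j ∈ Finset.range i, (C j + 1)) * f i ≤
      ∑ i ∈ Finset.Ico (l + 1) n, (∏ j ∈ Finset.range i, (C j + 1)) * g i := by
    apply Finset.sum_le_sum
    intro i hi
    simp only [Finset.mem_Ico] at hi
    exact Nat.mul_le_mul_left _ (hrest i hi.1 hi.2)
  omega

/-- Levels can be simulated by weights: scaling each level by the mixed-radix
multiplier `s l = ∏_{i < l} (B i + 1)` collapses the lexicographic order
`<_W` on cost vectors to the weighted-sum order. -/
theorem stmt_4 (L : ℕ) (B a b : Fin L → ℕ)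
    (ha : ∀ l, a l ≤ B l) (hb : ∀ l, b l ≤ B l) :
    (∑ l, (∏ i ∈ Finset.Iio l, (B i + 1)) * a l <
      ∑ l, (∏ i ∈ Finset.Iio l, (B i + 1)) * b l) ↔
    ∃ l, a l < b l ∧ ∀ i, l < i → a i ≤ b i := by
  classical
  set C : ℕ → ℕ := fun i => if h : i < L then B ⟨i, h⟩ else 0 with hCdef
  set F : ℕ → ℕ := fun i => if h : i < L then a ⟨i, h⟩ else 0 with hFdef
  set G : ℕ → ℕ := fun i => if h : i < L then b ⟨i, h⟩ else 0 with hGdef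
  have hCv : ∀ l : Fin L, C l.val = B l := fun l => by simp [hCdef, l.isLt]
  have hFv : ∀ l : Fin L, F l.val = a l := fun l => by simp [hFdef, l.isLt]
  have hGv : ∀ l : Fin L, G l.val = b l := fun l => by simp [hGdef, l.isLt]
  have hFC : ∀ i, F i ≤ C i := by
    intro i; by_cases h : i < L <;> simp [hFdef, hCdef, h]
    exact ha _
  have hGC : ∀ i, G i ≤ C i := by
    intro i; by_cases h : i < L <;> simp [hGdef, hCdef, h]
    exact hb _
  have hprod : ∀ l : Fin L, ∏ i ∈ Finset.Iio l, (B i + 1) =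
      ∏ j ∈ Finset.range l.val, (C j + 1) := by
    intro l
    rw [← Nat.Iio_eq_range, ← Fin.map_valEmbedding_Iio, Finset.prod_map]
    exact Finset.prod_congr rfl fun i _ => by rw [Fin.valEmbedding_apply, hCv]
  have hsum : ∀ (h : Fin L → ℕ) (H : ℕ → ℕ), (∀ l : Fin L, H l.val = h l) →
      ∑ l, (∏ i ∈ Finset.Iio l, (B i + 1)) * h l =
      ∑ i ∈ Finset.range L, (∏ j ∈ Finset.range i, (C j + 1)) * H i := by
    intro h H hH
    rw [← Fin.sum_univ_eq_sum_range (fun i => (∏ j ∈ Finset.range i, (C j + 1)) * H i) L]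
    exact Finset.sum_congr rfl fun l _ => by rw [hprod, hH]
  rw [hsum a F hFv, hsum b G hGv]
  by_cases hab : a = b
  · subst hab
    simp
    exact le_of_eq rfl
  · have hS : (Finset.univ.filter (fun l : Fin L => a l ≠ b l)).Nonempty := by
      obtain ⟨l, hl⟩ := Function.ne_iff.mp hab
      exact ⟨l, by simp [hl]⟩
    set m := (Finset.univ.filter (fun l : Fin L => a l ≠ b l)).max' hS with hm
    have hmem : a m ≠ b m := by
      have := (Finset.univ.filter (fun l : Fin L => a l ≠ b l)).max'_mem hS
      simpa using this
    have hmax : ∀ l : Fin L, a l ≠ b l → l ≤ m := by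
      intro l hl
      exact Finset.le_max' _ _ (by simp [hl])
    have heq : ∀ i : Fin L, m < i → a i = b i := by
      intro i hi
      by_contra h
      exact absurd (hmax i h) (not_le.mpr hi)
    rcases lt_or_gt_of_ne hmem with hlt | hgt
    · constructor
      · intro _
        exact ⟨m, hlt, fun i hi => le_of_eq (heq i hi)⟩
      · intro _
        apply lexlt C F G hFC L m.val m.isLt (by rw [hFv, hGv]; exact hlt)
        intro i h1 h2
        have : (⟨i, h2⟩ : Fin L) > m := h1
        have := heq ⟨i, h2⟩ this
        simp [hFdef, hGdef, h2, this]
    · have hba : ∑ i ∈ Finset.range L, (∏ j ∈ Finset.range i, (C j + 1)) * G i <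
          ∑ i ∈ Finset.range L, (∏ j ∈ Finset.range i, (C j + 1)) * F i := by
        apply lexlt C G F hGC L m.val m.isLt (by rw [hFv, hGv]; exact hgt)
        intro i h1 h2
        have : (⟨i, h2⟩ : Fin L) > m := h1
        have := heq ⟨i, h2⟩ this
        simp [hFdef, hGdef, h2, this]
      constructor
      · intro h; omega
      · rintro ⟨l, hl, hrest⟩
        have hlm : l ≤ m := hmax l (Nat.ne_of_lt hl)
        have hlm' : l < m := lt_of_le_of_ne hlm (by rintro rfl; omega)
        have := hrest m hlm'
        omega
end

section
/- Let n ≥ 1, and let p : Fin (n+1) → Bool and s : Fin n → Bool. Assume: (i) for every i : Fin n with i + 1 < n, if s i = true then s at index i+1 is true (the symmetry breakers ⊥ ← s_i, ¬s_{i+1} are satisfied); and (ii) the number of indices i with p i = true plus the number of indices j with s j = false is at least n (the constraint ⊥ ← COUNT[p_0,…,p_n, ¬s_1,…,¬s_n] < n is satisfied). Then for every j : Fin n, if s j = true then the number of indices i : Fin (n+1) with p i = true is at least n − (j : ℕ). (In the paper's 1-based indexing: if s_i is true then at least n − i + 1 of the literals p_0,…,p_n are true.) -/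
/-- Under the constraint `⊥ ← COUNT[p_0,…,p_n, ¬s_1,…,¬s_n] < n` and the
symmetry breakers `⊥ ← s_i, ¬s_{i+1}`, soft literal `s_j` (0-based `j`,
i.e. the paper's `s_{j+1}`) is true only if at least `n - j` of the
literals `p_0,…,p_n` are true. -/
theorem stmt_5 (n : ℕ) (hn : 1 ≤ n) (p : Fin (n + 1) → Bool) (s : Fin n → Bool)
    (h1 : ∀ i : Fin n, ∀ h : (i : ℕ) + 1 < n,
      s i = true → s ⟨(i : ℕ) + 1, h⟩ = true)
    (h2 : n ≤ (Finset.univ.filter fun i : Fin (n + 1) => p i = true).card +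
      (Finset.univ.filter fun j : Fin n => s j = false).card) :
    ∀ j : Fin n, s j = true →
      n - (j : ℕ) ≤ (Finset.univ.filter fun i : Fin (n + 1) => p i = true).card := by
  intro j hj
  -- all indices ≥ j have s = true
  have key : ∀ d : ℕ, ∀ h : (j : ℕ) + d < n, s ⟨(j : ℕ) + d, h⟩ = true := by
    intro d
    induction d with
    | zero => intro h; simpa using hj
    | succ d ih =>
        intro h
        have h' : (j : ℕ) + d < n := by omega
        exact h1 ⟨(j : ℕ) + d, h'⟩ h (ih h')
  have hsub : (Finset.univ.filter fun k : Fin n => s k = false) ⊆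
      Finset.univ.filter fun k : Fin n => (k : ℕ) < (j : ℕ) := by
    intro k hk
    simp only [Finset.mem_filter, Finset.mem_univ, true_and] at hk ⊢
    by_contra hlt
    push_neg at hlt
    have hk2 : s ⟨(j : ℕ) + ((k : ℕ) - (j : ℕ)), by omega⟩ = true :=
      key _ (by omega)
    have hke : k = ⟨(j : ℕ) + ((k : ℕ) - (j : ℕ)), by omega⟩ := Fin.ext (by simp; omega)
    rw [hke, hk2] at hk
    exact absurd hk (by simp)
  have hcard : (Finset.univ.filter fun k : Fin n => s k = false).card ≤ (j : ℕ) := by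
    calc (Finset.univ.filter fun k : Fin n => s k = false).card
        ≤ (Finset.univ.filter fun k : Fin n => (k : ℕ) < (j : ℕ)).card :=
          Finset.card_le_card hsub
      _ ≤ (Finset.range (j : ℕ)).card := by
          refine Finset.card_le_card_of_injOn (fun k => (k : ℕ)) ?_ ?_
          · intro k hk
            simp only [Finset.coe_filter, Finset.mem_coe, Finset.mem_filter, Finset.mem_univ, true_and, Set.mem_setOf_eq] at hk
            simpa using hk
          · intro a _ b _ hab
            exact Fin.ext hab
      _ = (j : ℕ) := Finset.card_range _
  omega
end
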